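/- Any Miura type transformation over the equation u_t = u^{5/2}·u₅ (considered where u > 0, i.e. with S taking positive values) has order not greater than 5. That is, if (S, R) with S = S(x,t,v₀,…,v_n), S > 0, is a Miura type transformation of order n over u_t = u^{5/2}u₅, then n ≤ 5. -/

import Mathlib

/-- Partial derivative of `F(x,t,v₀,v₁,…)` in the variable `v i`. -/
noncomputable def pdv (i : ℕ) (F : ℝ → ℝ → (ℕ → ℝ) → ℝ) : ℝ → ℝ → (ℕ → ℝ) → ℝ :=
  fun x t v => deriv (fun s => F x t (Function.update v i s)) (v i)

/-- Total `x`-derivative: `D_x F = ∂F/∂x + Σ_i v_{i+1} ∂F/∂v_i`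
(the sum is finite on functions depending on finitely many `v_i`). -/
noncomputable def totalDx (F : ℝ → ℝ → (ℕ → ℝ) → ℝ) : ℝ → ℝ → (ℕ → ℝ) → ℝ :=
  fun x t v => deriv (fun y => F y t v) x + ∑' i : ℕ, v (i + 1) * pdv i F x t v

/-- Total `t`-derivative along the evolution `v_t = R`:
`D_t F = ∂F/∂t + Σ_i D_x^i(R) ∂F/∂v_i`. -/
noncomputable def totalDt (R F : ℝ → ℝ → (ℕ → ℝ) → ℝ) : ℝ → ℝ → (ℕ → ℝ) → ℝ :=
  fun x t v => deriv (fun s => F x s v) t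
    + ∑' i : ℕ, (totalDx^[i] R) x t v * pdv i F x t v

/-- `F` is a smooth function of `x, t, v₀, …, v_n` only. -/
def IsCyl (n : ℕ) (F : ℝ → ℝ → (ℕ → ℝ) → ℝ) : Prop :=
  ∃ G : ℝ × ℝ × (Fin (n + 1) → ℝ) → ℝ, ContDiff ℝ (⊤ : ℕ∞) G ∧
    ∀ x t v, F x t v = G (x, t, fun i => v i.val)

namespace S7

open Function Filter Topology Set Finset

variable {F F' R S : ℝ → ℝ → (ℕ → ℝ) → ℝ} {m k n M : ℕ}

lemma indep (h : IsCyl m F) {v w : ℕ → ℝ} (hvw : ∀ i, i ≤ m → v i = w i) (x t : ℝ) :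
    F x t v = F x t w := by
  obtain ⟨G, -, hFG⟩ := h
  have : (fun i : Fin (m + 1) => v i.val) = fun i : Fin (m + 1) => w i.val :=
    funext fun j => hvw _ (Nat.lt_succ_iff.mp j.2)
  rw [hFG, hFG, this]

lemma pdv_def (i : ℕ) (x t : ℝ) (v : ℕ → ℝ) :
    pdv i F x t v = deriv (fun s => F x t (Function.update v i s)) (v i) := rfl

lemma pdv_congr_fun (h : ∀ x t v, F x t v = F' x t v) (i : ℕ) (x t : ℝ) (v : ℕ → ℝ) :
    pdv i F x t v = pdv i F' x t v := by
  unfold pdv; congr 1; funext s; exact h _ _ _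

/-- `pdv j F = 0` for `j` beyond the order. -/
lemma pdv_high (h : IsCyl m F) {j : ℕ} (hj : m < j) (x t : ℝ) (v : ℕ → ℝ) :
    pdv j F x t v = 0 := by
  have : (fun s => F x t (Function.update v j s)) = fun _ => F x t v := by
    funext s
    exact indep h (fun i hi => Function.update_of_ne (by omega) _ _) x t
  rw [pdv_def, this, deriv_const]

/-- pdv in low variable is unchanged by updating a high variable. -/
lemma pdv_update_high (h : IsCyl m F) {i j : ℕ} (hj : m < j) (hij : i ≠ j)
    (x t : ℝ) (v : ℕ → ℝ) (s : ℝ) :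
    pdv i F x t (Function.update v j s) = pdv i F x t v := by
  rw [pdv_def, pdv_def, Function.update_of_ne hij]
  congr 1
  funext a
  apply indep h (fun l hl => ?_) x t
  rcases eq_or_ne l i with rfl | hli
  · rw [Function.update_self, Function.update_self]
  · rw [Function.update_of_ne hli, Function.update_of_ne hli,
      Function.update_of_ne (show l ≠ j by omega)]

lemma derivt_update_high (h : IsCyl m F) {j : ℕ} (hj : m < j)
    (x t : ℝ) (v : ℕ → ℝ) (s : ℝ) :
    deriv (fun τ => F x τ (Function.update v j s)) t = deriv (fun τ => F x τ v) t := by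
  congr 1
  funext τ
  exact indep h (fun i hi => Function.update_of_ne (by omega) _ _) x τ



/-- Derivative of a smooth function along an affine line. -/
lemma hasDerivAt_line {E : Type*} [NormedAddCommGroup E] [NormedSpace ℝ E]
    {G : E → ℝ} (hG : ContDiff ℝ (⊤ : ℕ∞) G) (p w : E) (s : ℝ) :
    HasDerivAt (fun s : ℝ => G (p + s • w)) (fderiv ℝ G (p + s • w) w) s := by
  have h1 : HasDerivAt (fun s : ℝ => p + s • w) w s := by
    simpa using ((hasDerivAt_id s).smul_const w).const_add p
  have h2 : HasFDerivAt G (fderiv ℝ G (p + s • w)) ((fun s : ℝ => p + s • w) s) :=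
    ((hG.differentiable (by simp)) _).hasFDerivAt
  exact h2.comp_hasDerivAt s h1

lemma proj_update {v : ℕ → ℝ} {i : ℕ} (hi : i < m + 1) (s : ℝ) :
    (fun j : Fin (m + 1) => (Function.update v i s) j.val)
      = Function.update (fun j : Fin (m + 1) => v j.val) ⟨i, hi⟩ s := by
  funext j
  simp [Function.update_apply, Fin.ext_iff]

lemma line_base_eq {v : ℕ → ℝ} {i : ℕ} (hi : i < m + 1) (x t s : ℝ) :
    ((x, t, Function.update (fun j : Fin (m+1) => v j.val) ⟨i, hi⟩ 0)
      + s • ((0, 0, Pi.single (⟨i, hi⟩ : Fin (m+1)) 1) : ℝ × ℝ × (Fin (m+1) → ℝ)))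
    = (x, t, Function.update (fun j : Fin (m+1) => v j.val) ⟨i, hi⟩ s) := by
  refine Prod.ext (by simp) (Prod.ext (by simp) ?_)
  funext j
  rcases eq_or_ne j ⟨i, hi⟩ with rfl | hj
  · simp
  · simp [Function.update_of_ne hj, Pi.single_apply, hj]




lemma hasDerivAt_coord {G : ℝ × ℝ × (Fin (m+1) → ℝ) → ℝ}
    (hG : ContDiff ℝ (⊤ : ℕ∞) G) (hFG : ∀ x t v, F x t v = G (x, t, fun i => v i.val))
    {i : ℕ} (hi : i < m + 1) (x t : ℝ) (v : ℕ → ℝ) (s : ℝ) :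
    HasDerivAt (fun s => F x t (Function.update v i s))
      (fderiv ℝ G (x, t, Function.update (fun j : Fin (m+1) => v j.val) ⟨i, hi⟩ s)
        ((0, 0, Pi.single (⟨i, hi⟩ : Fin (m+1)) 1) : ℝ × ℝ × (Fin (m+1) → ℝ))) s := by
  have hrw : (fun s => F x t (Function.update v i s))
      = fun s : ℝ => G ((x, t, Function.update (fun j : Fin (m+1) => v j.val) ⟨i, hi⟩ 0)
          + s • ((0, 0, Pi.single (⟨i, hi⟩ : Fin (m+1)) 1) : ℝ × ℝ × (Fin (m+1) → ℝ))) := by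
    funext a
    rw [hFG, line_base_eq hi x t a, proj_update hi]
  rw [hrw]
  have := hasDerivAt_line hG
    ((x, t, Function.update (fun j : Fin (m+1) => v j.val) ⟨i, hi⟩ 0))
    ((0, 0, Pi.single (⟨i, hi⟩ : Fin (m+1)) 1) : ℝ × ℝ × (Fin (m+1) → ℝ)) s
  rwa [line_base_eq hi x t s] at this

lemma pdv_rep {G : ℝ × ℝ × (Fin (m+1) → ℝ) → ℝ}
    (hG : ContDiff ℝ (⊤ : ℕ∞) G) (hFG : ∀ x t v, F x t v = G (x, t, fun i => v i.val))
    {i : ℕ} (hi : i < m + 1) (x t : ℝ) (v : ℕ → ℝ) :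
    pdv i F x t v = fderiv ℝ G (x, t, fun j : Fin (m+1) => v j.val)
        ((0, 0, Pi.single (⟨i, hi⟩ : Fin (m+1)) 1) : ℝ × ℝ × (Fin (m+1) → ℝ)) := by
  have h := (hasDerivAt_coord hG hFG hi x t v (v i)).deriv
  have h2 : Function.update (fun j : Fin (m+1) => v j.val) ⟨i, hi⟩ (v i)
      = fun j : Fin (m+1) => v j.val := Function.update_eq_self _ _
  rw [pdv_def, h, h2]

lemma hasDerivAt_x {G : ℝ × ℝ × (Fin (m+1) → ℝ) → ℝ}
    (hG : ContDiff ℝ (⊤ : ℕ∞) G) (hFG : ∀ x t v, F x t v = G (x, t, fun i => v i.val))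
    (x t : ℝ) (v : ℕ → ℝ) :
    HasDerivAt (fun y => F y t v)
      (fderiv ℝ G (x, t, fun j : Fin (m+1) => v j.val)
        ((1, 0, 0) : ℝ × ℝ × (Fin (m+1) → ℝ))) x := by
  have hbase : ∀ y : ℝ, ((0, t, fun j : Fin (m+1) => v j.val)
      + y • ((1, 0, 0) : ℝ × ℝ × (Fin (m+1) → ℝ)))
      = ((y, t, fun j : Fin (m+1) => v j.val) : ℝ × ℝ × (Fin (m+1) → ℝ)) := by
    intro y
    refine Prod.ext (by simp) (Prod.ext (by simp) (by funext j; simp))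
  have hrw : (fun y => F y t v)
      = fun y : ℝ => G ((0, t, fun j : Fin (m+1) => v j.val)
          + y • ((1, 0, 0) : ℝ × ℝ × (Fin (m+1) → ℝ))) := by
    funext y
    rw [hFG, hbase]
  rw [hrw]
  have := hasDerivAt_line hG ((0, t, fun j : Fin (m+1) => v j.val))
    ((1, 0, 0) : ℝ × ℝ × (Fin (m+1) → ℝ)) x
  rwa [hbase] at this

lemma diff_line (h : IsCyl m F) (x t : ℝ) (v : ℕ → ℝ) (i : ℕ) :
    Differentiable ℝ (fun s => F x t (Function.update v i s)) := by
  obtain ⟨G, hG, hFG⟩ := h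
  rcases lt_or_ge i (m + 1) with hi | hi
  · exact fun s => (hasDerivAt_coord hG hFG hi x t v s).differentiableAt
  · have : (fun s => F x t (Function.update v i s)) = fun _ => F x t v := by
      funext s
      exact indep ⟨G, hG, hFG⟩ (fun l hl => Function.update_of_ne (by omega) _ _) x t
    rw [this]
    exact differentiable_const _

lemma totalDx_apply (h : IsCyl m F) (x t : ℝ) (v : ℕ → ℝ) :
    totalDx F x t v = deriv (fun y => F y t v) x
      + ∑ i ∈ Finset.range (m + 1), v (i + 1) * pdv i F x t v := by
  unfold totalDx
  congr 1
  exact tsum_eq_sum fun i hi =>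
    by rw [pdv_high h (by simpa using hi) x t v, mul_zero]


lemma isCyl_mono (h : IsCyl m F) {m' : ℕ} (hmm : m ≤ m') : IsCyl m' F := by
  obtain ⟨G, hG, hFG⟩ := h
  refine ⟨fun q => G (q.1, q.2.1, fun j : Fin (m+1) => q.2.2 ⟨j.val, by omega⟩), ?_, ?_⟩
  · refine hG.comp (contDiff_fst.prodMk ((contDiff_fst.comp contDiff_snd).prodMk ?_))
    exact contDiff_pi.2 fun j =>
      (ContinuousLinearMap.proj (R := ℝ) (φ := fun _ : Fin (m'+1) => ℝ)
        (⟨j.val, by omega⟩ : Fin (m'+1))).contDiff.comp (contDiff_snd.comp contDiff_snd)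
  · intro x t v
    exact hFG x t v

lemma isCyl_totalDx (h : IsCyl m F) : IsCyl (m + 1) (totalDx F) := by
  classical
  obtain ⟨G, hG, hFG⟩ := h
  set ρ : ℝ × ℝ × (Fin (m+2) → ℝ) → ℝ × ℝ × (Fin (m+1) → ℝ) :=
    fun q => (q.1, q.2.1, fun j => q.2.2 j.castSucc) with hρdef
  have hρ : ContDiff ℝ (⊤ : ℕ∞) ρ := by
    refine contDiff_fst.prodMk ((contDiff_fst.comp contDiff_snd).prodMk ?_)
    exact contDiff_pi.2 fun j =>
      (ContinuousLinearMap.proj (R := ℝ) (φ := fun _ : Fin (m+2) => ℝ)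
        j.castSucc).contDiff.comp (contDiff_snd.comp contDiff_snd)
  have hfd : ContDiff ℝ (⊤ : ℕ∞) (fderiv ℝ G) := hG.fderiv_right (by simp)
  refine ⟨fun q => fderiv ℝ G (ρ q) ((1, 0, 0) : ℝ × ℝ × (Fin (m+1) → ℝ))
      + ∑ i : Fin (m+1), q.2.2 i.succ * fderiv ℝ G (ρ q)
        ((0, 0, Pi.single i 1) : ℝ × ℝ × (Fin (m+1) → ℝ)), ?_, ?_⟩
  · refine ContDiff.add ((hfd.comp hρ).clm_apply contDiff_const) ?_
    refine ContDiff.sum fun i _ => ContDiff.mul ?_ ((hfd.comp hρ).clm_apply contDiff_const)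
    exact (ContinuousLinearMap.proj (R := ℝ) (φ := fun _ : Fin (m+2) => ℝ)
      i.succ).contDiff.comp (contDiff_snd.comp contDiff_snd)
  · intro x t v
    have hρq : ρ (x, t, fun i : Fin (m+2) => v i.val) = (x, t, fun j : Fin (m+1) => v j.val) := by
      simp only [hρdef]
      refine Prod.ext rfl (Prod.ext rfl ?_)
      funext j
      simp
    rw [totalDx_apply ⟨G, hG, hFG⟩ x t v]
    simp only [hρq]
    congr 1
    · exact (hasDerivAt_x hG hFG x t v).deriv
    · have hsum : ∀ i : Fin (m+1),
          ((fun q : ℝ × ℝ × (Fin (m+2) → ℝ) => q.2.2) (x, t, fun i : Fin (m+2) => v i.val)) i.succ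
            * fderiv ℝ G (x, t, fun j : Fin (m+1) => v j.val)
              ((0, 0, Pi.single i 1) : ℝ × ℝ × (Fin (m+1) → ℝ))
          = v (i.val + 1) * pdv i.val F x t v := by
        intro i
        have : pdv i.val F x t v = fderiv ℝ G (x, t, fun j : Fin (m+1) => v j.val)
            ((0, 0, Pi.single (⟨i.val, i.isLt⟩ : Fin (m+1)) 1) : ℝ × ℝ × (Fin (m+1) → ℝ)) :=
          pdv_rep hG hFG i.isLt x t v
        rw [this]
        rfl
    -- convert the Fin sum to a range sum
      rw [show (∑ i : Fin (m+1), (fun i : Fin (m+2) => v i.val) i.succ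
            * fderiv ℝ G (x, t, fun j : Fin (m+1) => v j.val)
              ((0, 0, Pi.single i 1) : ℝ × ℝ × (Fin (m+1) → ℝ)))
          = ∑ i : Fin (m+1), v (i.val + 1) * pdv i.val F x t v from
        Finset.sum_congr rfl fun i _ => hsum i]
      exact (Fin.sum_univ_eq_sum_range (fun i => v (i + 1) * pdv i F x t v) (m+1)).symm

/-- The top partial derivative of the total derivative. -/
lemma pdv_top_totalDx (h : IsCyl m F) (x t : ℝ) (v : ℕ → ℝ) :
    pdv (m + 1) (totalDx F) x t v = pdv m F x t v := by
  have hfun : (fun s => totalDx F x t (Function.update v (m+1) s))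
      = fun s => (deriv (fun y => F y t v) x
          + ∑ i ∈ Finset.range m, v (i + 1) * pdv i F x t v)
          + s * pdv m F x t v := by
    funext s
    rw [totalDx_apply h x t (Function.update v (m+1) s)]
    have h1 : deriv (fun y => F y t (Function.update v (m+1) s)) x
        = deriv (fun y => F y t v) x := by
      congr 1
      funext y
      exact indep h (fun l hl => Function.update_of_ne (by omega) _ _) y t
    rw [h1, Finset.sum_range_succ]
    have h2 : ∀ i ∈ Finset.range m,
        Function.update v (m+1) s (i + 1) * pdv i F x t (Function.update v (m+1) s)
          = v (i + 1) * pdv i F x t v := by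
      intro i hi
      have hi' : i < m := Finset.mem_range.mp hi
      rw [Function.update_of_ne (by omega), pdv_update_high h (by omega) (by omega)]
    rw [Finset.sum_congr rfl h2]
    have h3 : Function.update v (m+1) s (m + 1) * pdv m F x t (Function.update v (m+1) s)
        = s * pdv m F x t v := by
      rw [Function.update_self, pdv_update_high h (by omega) (by omega)]
    rw [h3, add_assoc]
  rw [pdv_def, hfun]
  rw [deriv_const_add]
  have := ((hasDerivAt_id (v (m+1))).mul_const (pdv m F x t v)).deriv
  simpa using this

lemma isCyl_iter (h : IsCyl m F) (k : ℕ) : IsCyl (m + k) (totalDx^[k] F) := by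
  induction k with
  | zero => simpa using h
  | succ k ih =>
      rw [Function.iterate_succ_apply']
      exact isCyl_totalDx ih

lemma pdv_top_iter (h : IsCyl m F) (k : ℕ) (x t : ℝ) (v : ℕ → ℝ) :
    pdv (m + k) (totalDx^[k] F) x t v = pdv m F x t v := by
  induction k generalizing x t v with
  | zero => rfl
  | succ k ih =>
      rw [Function.iterate_succ_apply']
      have := pdv_top_totalDx (isCyl_iter h k) (F := totalDx^[k] F) x t v
      rw [show m + (k+1) = (m + k) + 1 by omega, this, ih]

section CongrU

variable {U : ℝ → ℝ → (ℕ → ℝ) → Prop}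
  (hU2 : ∀ x t v, U x t v → ∀ j : ℕ, ∀ᶠ s in nhds (v j), U x t (Function.update v j s))
  (hU3 : ∀ x t v, U x t v → ∀ᶠ y in nhds x, U y t v)

include hU2 in
lemma pdv_congrU (hFF' : ∀ x t v, U x t v → F x t v = F' x t v)
    {x t : ℝ} {v : ℕ → ℝ} (hq : U x t v) (i : ℕ) :
    pdv i F x t v = pdv i F' x t v := by
  apply Filter.EventuallyEq.deriv_eq
  filter_upwards [hU2 x t v hq i] with s hs
  exact hFF' _ _ _ hs

include hU2 hU3 in
lemma totalDx_congrU (hFF' : ∀ x t v, U x t v → F x t v = F' x t v) :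
    ∀ x t v, U x t v → totalDx F x t v = totalDx F' x t v := by
  intro x t v hq
  unfold totalDx
  congr 1
  · apply Filter.EventuallyEq.deriv_eq
    filter_upwards [hU3 x t v hq] with y hy
    exact hFF' _ _ _ hy
  · exact tsum_congr fun i => by rw [pdv_congrU hU2 hFF' hq i]

include hU2 hU3 in
lemma totalDx_iter_congrU (hFF' : ∀ x t v, U x t v → F x t v = F' x t v) (k : ℕ) :
    ∀ x t v, U x t v → totalDx^[k] F x t v = totalDx^[k] F' x t v := by
  induction k with
  | zero => exact hFF'
  | succ k ih =>
      intro x t v hq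
      rw [Function.iterate_succ_apply', Function.iterate_succ_apply']
      exact totalDx_congrU hU2 hU3 ih x t v hq

end CongrU

/-- A differentiable function with zero derivative on `uIcc a b` takes equal values at `a, b`. -/
lemma const_seg {f : ℝ → ℝ} (hf : Differentiable ℝ f)
    {a b : ℝ} (h0 : ∀ s ∈ Set.uIcc a b, deriv f s = 0) : f a = f b := by
  rcases le_total a b with hab | hab
  · have := constant_of_has_deriv_right_zero (f := f) (a := a) (b := b)
      (hf.continuous.continuousOn) (fun x hx => by
        have hx' : x ∈ Set.uIcc a b := by
          rw [Set.uIcc_of_le hab]; exact Set.mem_Icc.mpr ⟨hx.1, hx.2.le⟩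
        have hd := (hf x).hasDerivAt
        rw [h0 x hx'] at hd
        exact hd.hasDerivWithinAt)
    exact (this b (Set.mem_Icc.mpr ⟨hab, le_refl b⟩)).symm
  · have := constant_of_has_deriv_right_zero (f := f) (a := b) (b := a)
      (hf.continuous.continuousOn) (fun x hx => by
        have hx' : x ∈ Set.uIcc a b := by
          rw [Set.uIcc_of_ge hab]; exact Set.mem_Icc.mpr ⟨hx.1, hx.2.le⟩
        have hd := (hf x).hasDerivAt
        rw [h0 x hx'] at hd
        exact hd.hasDerivWithinAt)
    exact this a (Set.mem_Icc.mpr ⟨hab, le_refl a⟩)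

section Freeze

variable {U : ℝ → ℝ → (ℕ → ℝ) → Prop} {vc : ℕ → ℝ}

lemma freeze_eq (hRM : IsCyl M R) (k : ℕ)
    (hUseg : ∀ x t v, U x t v → ∀ j s, k < j → s ∈ Set.uIcc (v j) (vc j) →
      U x t (Function.update v j s))
    (hP : ∀ x t v, U x t v → ∀ j, k < j → pdv j R x t v = 0) :
    ∀ x t v, U x t v → R x t v = R x t (fun j => if j ≤ k then v j else vc j) := by
  intro x t v hq
  set w : ℕ → (ℕ → ℝ) := fun d j => if k < j ∧ j < k + 1 + d then vc j else v j with hw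
  have hw0 : w 0 = v := by
    funext j; simp only [hw]; rw [if_neg (by omega)]
  have hwsucc : ∀ d, w (d + 1) = Function.update (w d) (k + 1 + d) (vc (k + 1 + d)) := by
    intro d
    funext j
    rcases eq_or_ne j (k + 1 + d) with rfl | hj
    · simp only [hw, Function.update_self]; rw [if_pos (by omega)]
    · simp only [hw, Function.update_of_ne hj]
      by_cases hcond : k < j ∧ j < k + 1 + d
      · rw [if_pos hcond, if_pos ⟨hcond.1, by omega⟩]
      · rw [if_neg hcond, if_neg (by omega)]
  have main : ∀ d, U x t (w d) ∧ R x t v = R x t (w d) := by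
    intro d
    induction d with
    | zero => rw [hw0]; exact ⟨hq, rfl⟩
    | succ d ih =>
        obtain ⟨hU, hRd⟩ := ih
        have hkj : k < k + 1 + d := by omega
        refine ⟨?_, ?_⟩
        · rw [hwsucc d]
          exact hUseg x t (w d) hU _ _ hkj Set.right_mem_uIcc
        · rw [hwsucc d, hRd]
          have hconst : R x t (Function.update (w d) (k+1+d) (w d (k+1+d)))
              = R x t (Function.update (w d) (k+1+d) (vc (k+1+d))) := by
            refine const_seg (diff_line hRM x t (w d) (k+1+d)) fun s hs => ?_
            have hUs : U x t (Function.update (w d) (k+1+d) s) :=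
              hUseg x t (w d) hU _ s hkj hs
            have h0 := hP x t (Function.update (w d) (k+1+d) s) hUs _ hkj
            rw [pdv_def] at h0
            simp only [Function.update_self, Function.update_idem] at h0
            exact h0
          rwa [Function.update_eq_self] at hconst
  have hfin := (main (M - k)).2
  rw [hfin]
  apply indep hRM (fun j hj => ?_) x t
  simp only [hw]
  by_cases hjk : j ≤ k
  · rw [if_neg (by omega), if_pos hjk]
  · rw [if_pos (by omega), if_neg hjk]

/-- The frozen function is cylindrical of order `k`. -/
lemma isCyl_freeze (hRM : IsCyl M R) {k : ℕ} (hkM : k ≤ M) (vc : ℕ → ℝ) :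
    IsCyl k (fun x t v => R x t (fun j => if j ≤ k then v j else vc j)) := by
  obtain ⟨G, hG, hFG⟩ := hRM
  classical
  refine ⟨fun q => G (q.1, q.2.1,
      fun j : Fin (M+1) => if h : j.val ≤ k then q.2.2 ⟨j.val, by omega⟩ else vc j.val), ?_, ?_⟩
  · refine hG.comp (contDiff_fst.prodMk ((contDiff_fst.comp contDiff_snd).prodMk ?_))
    refine contDiff_pi.2 fun j => ?_
    by_cases h : j.val ≤ k
    · simp only [h, dif_pos]
      exact (ContinuousLinearMap.proj (R := ℝ) (φ := fun _ : Fin (k+1) => ℝ)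
        (⟨j.val, by omega⟩ : Fin (k+1))).contDiff.comp (contDiff_snd.comp contDiff_snd)
    · simp only [h, dif_neg, not_false_iff]
      exact contDiff_const
  · intro x t v
    show R x t (fun j => if j ≤ k then v j else vc j) = _
    rw [hFG]
    refine congrArg G ?_
    refine Prod.ext rfl (Prod.ext rfl ?_)
    funext j
    by_cases h : j.val ≤ k <;> simp [h]

end Freeze

section Key

variable {U : ℝ → ℝ → (ℕ → ℝ) → Prop}

lemma key_lhs (hS : IsCyl n S) (hRM : IsCyl M R)
    {R' : ℝ → ℝ → (ℕ → ℝ) → ℝ} (hR' : IsCyl k R')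
    (hU2 : ∀ x t v, U x t v → ∀ j : ℕ, ∀ᶠ s in nhds (v j), U x t (Function.update v j s))
    (hU3 : ∀ x t v, U x t v → ∀ᶠ y in nhds x, U y t v)
    (hEq : ∀ x t v, U x t v → R x t v = R' x t v)
    (hk : 0 < k)
    {x t : ℝ} {v : ℕ → ℝ} (hq : U x t v) :
    pdv (n + k) (totalDt R S) x t v = pdv k R x t v * pdv n S x t v := by
  have hfun : (fun s => totalDt R S x t (Function.update v (n+k) s))
      = fun s => deriv (fun τ => S x τ v) t
          + ∑ i ∈ Finset.range (n+1),
              (totalDx^[i] R) x t (Function.update v (n+k) s) * pdv i S x t v := by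
    funext s
    show deriv (fun τ => S x τ (Function.update v (n+k) s)) t + _ = _
    rw [derivt_update_high hS (by omega) x t v s]
    congr 1
    rw [tsum_eq_sum (s := Finset.range (n+1))
      (fun i hi => by rw [pdv_high hS (by simpa using hi), mul_zero])]
    refine Finset.sum_congr rfl fun i hi => ?_
    have hi' := Finset.mem_range.mp hi
    rw [pdv_update_high hS (show n < n+k by omega) (show i ≠ n+k by omega) x t v s]
  rw [pdv_def, hfun, deriv_const_add]
  have hdiff : ∀ i ∈ Finset.range (n+1),
      DifferentiableAt ℝ
        (fun s => (totalDx^[i] R) x t (Function.update v (n+k) s) * pdv i S x t v)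
        (v (n+k)) := fun i _ =>
    ((diff_line (isCyl_iter hRM i) x t v (n+k)) (v (n+k))).mul_const _
  rw [deriv_fun_sum hdiff]
  have hterm : ∀ i ∈ Finset.range (n+1),
      deriv (fun s => (totalDx^[i] R) x t (Function.update v (n+k) s) * pdv i S x t v)
          (v (n+k))
        = pdv (n+k) (totalDx^[i] R) x t v * pdv i S x t v := by
    intro i _
    rw [deriv_mul_const ((diff_line (isCyl_iter hRM i) x t v (n+k)) (v (n+k)))]
    rfl
  rw [Finset.sum_congr rfl hterm]
  have hcong : ∀ i : ℕ, pdv (n+k) (totalDx^[i] R) x t v = pdv (n+k) (totalDx^[i] R') x t v :=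
    fun i => pdv_congrU hU2 (totalDx_iter_congrU hU2 hU3 hEq i) hq (n+k)
  rw [Finset.sum_eq_single_of_mem n (Finset.self_mem_range_succ n) ?_]
  · rw [hcong n, show n + k = k + n by omega, pdv_top_iter hR' n x t v,
      ← pdv_congrU hU2 hEq hq k]
  · intro i hi hin
    have hi' := Finset.mem_range.mp hi
    rw [hcong i, pdv_high (isCyl_iter hR' i) (show k + i < n + k by omega) x t v, zero_mul]

lemma key_rhs (hS : IsCyl n S) {k : ℕ} (hk : 0 < k) (x t : ℝ) (v : ℕ → ℝ) :
    pdv (n + k) (fun x t v => (S x t v) ^ ((5:ℝ)/2) * (totalDx^[5] S) x t v) x t v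
      = (S x t v) ^ ((5:ℝ)/2) * pdv (n + k) (totalDx^[5] S) x t v := by
  show deriv (fun s => (S x t (Function.update v (n+k) s)) ^ ((5:ℝ)/2)
      * (totalDx^[5] S) x t (Function.update v (n+k) s)) (v (n+k)) = _
  have hfun : (fun s => (S x t (Function.update v (n+k) s)) ^ ((5:ℝ)/2)
        * (totalDx^[5] S) x t (Function.update v (n+k) s))
      = fun s => (S x t v) ^ ((5:ℝ)/2)
        * (totalDx^[5] S) x t (Function.update v (n+k) s) := by
    funext s
    rw [show S x t (Function.update v (n+k) s) = S x t v from
      indep hS (fun i hi => Function.update_of_ne (by omega) _ _) x t]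
  rw [hfun, deriv_const_mul_field]
  rfl

end Key

lemma dist_le_of_mem_uIcc {a b s : ℝ} (hs : s ∈ Set.uIcc a b) : dist s b ≤ dist a b := by
  rw [Real.dist_eq, Real.dist_eq]
  rcases Set.mem_uIcc.mp hs with ⟨h1, h2⟩ | ⟨h1, h2⟩
  · rw [abs_of_nonpos (by linarith : s - b ≤ 0), abs_of_nonpos (by linarith : a - b ≤ 0)]
    linarith
  · rw [abs_of_nonneg (by linarith : 0 ≤ s - b), abs_of_nonneg (by linarith : 0 ≤ a - b)]
    linarith

lemma exists_box (hS : IsCyl n S) {x₀ t₀ : ℝ} {v₀ : ℕ → ℝ}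
    (h0 : pdv n S x₀ t₀ v₀ ≠ 0) :
    ∃ δ > 0, ∀ x t (v : ℕ → ℝ), dist x x₀ < δ → dist t t₀ < δ →
      (∀ i, i ≤ n → dist (v i) (v₀ i) < δ) → pdv n S x t v ≠ 0 := by
  obtain ⟨G, hG, hFG⟩ := hS
  classical
  set w₀ : ℝ × ℝ × (Fin (n+1) → ℝ) :=
    ((0, 0, Pi.single (⟨n, by omega⟩ : Fin (n+1)) 1) : ℝ × ℝ × (Fin (n+1) → ℝ)) with hw₀
  have hrep : ∀ x t (v : ℕ → ℝ), pdv n S x t v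
      = fderiv ℝ G (x, t, fun j : Fin (n+1) => v j.val) w₀ :=
    fun x t v => pdv_rep hG hFG (by omega) x t v
  have hΦ : Continuous fun p => fderiv ℝ G p w₀ :=
    (hG.continuous_fderiv (by simp)).clm_apply continuous_const
  have hopen : IsOpen {p : ℝ × ℝ × (Fin (n+1) → ℝ) | fderiv ℝ G p w₀ ≠ 0} :=
    isOpen_compl_singleton.preimage hΦ
  have hmem : (x₀, t₀, fun j : Fin (n+1) => v₀ j.val) ∈
      {p : ℝ × ℝ × (Fin (n+1) → ℝ) | fderiv ℝ G p w₀ ≠ 0} := by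
    rw [Set.mem_setOf_eq, ← hrep]
    exact h0
  obtain ⟨ε, hε, hball⟩ := Metric.isOpen_iff.mp hopen _ hmem
  refine ⟨ε, hε, fun x t v hx ht hv => ?_⟩
  rw [hrep]
  refine hball ?_
  rw [Metric.mem_ball]
  have hd : dist ((x, t, fun j : Fin (n+1) => v j.val) : ℝ × ℝ × (Fin (n+1) → ℝ))
      (x₀, t₀, fun j : Fin (n+1) => v₀ j.val)
      = max (dist x x₀) (max (dist t t₀) (dist (fun j : Fin (n+1) => v j.val)
          (fun j : Fin (n+1) => v₀ j.val))) := by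
    rw [Prod.dist_eq, Prod.dist_eq]
  rw [hd]
  refine max_lt hx (max_lt ht ?_)
  rw [dist_pi_lt_iff hε]
  exact fun b => hv b.val (Nat.lt_succ_iff.mp b.isLt)

end S7

/-- Any Miura type transformation `(S, R)` of order `n` (with `S > 0`) over the
Harry–Dym type equation `u_t = u^{5/2} u₅` has order `n ≤ 5`: the identity
`D_t S = S^{5/2} · D_x⁵ S` together with `∂S/∂v_n ≢ 0` forces `n ≤ 5`. -/
theorem stmt7 (n r : ℕ) (S R : ℝ → ℝ → (ℕ → ℝ) → ℝ)
    (hS : IsCyl n S) (hR : IsCyl r R)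
    (hSpos : ∀ x t v, 0 < S x t v)
    (hSn : ∃ x t v, pdv n S x t v ≠ 0)
    (hMT : ∀ x t v, totalDt R S x t v
      = (S x t v) ^ ((5 : ℝ) / 2) * (totalDx^[5] S) x t v) :
    n ≤ 5 := by
  by_contra hn
  push_neg at hn
  obtain ⟨x₀, t₀, v₀, hq₀⟩ := hSn
  obtain ⟨δ, hδ, hbox⟩ := S7.exists_box hS hq₀
  set M := max r 6 with hM
  have hM6 : 6 ≤ M := le_max_right _ _
  have hRM : IsCyl M R := S7.isCyl_mono hR (le_max_left _ _)
  set U : ℝ → ℝ → (ℕ → ℝ) → Prop := fun x t v =>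
    dist x x₀ < δ ∧ dist t t₀ < δ ∧ ∀ i, i ≤ n → dist (v i) (v₀ i) < δ with hU
  have hUne : ∀ x t v, U x t v → pdv n S x t v ≠ 0 := fun x t v h =>
    hbox x t v h.1 h.2.1 h.2.2
  have hU2 : ∀ x t v, U x t v → ∀ j : ℕ, ∀ᶠ s in nhds (v j),
      U x t (Function.update v j s) := by
    intro x t v h j
    by_cases hj : j ≤ n
    · have hball : Metric.ball (v₀ j) δ ∈ nhds (v j) :=
        Metric.isOpen_ball.mem_nhds (h.2.2 j hj)
      filter_upwards [hball] with s hs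
      refine ⟨h.1, h.2.1, fun i hi => ?_⟩
      rcases eq_or_ne i j with rfl | hij
      · rwa [Function.update_self]
      · rw [Function.update_of_ne hij]; exact h.2.2 i hi
    · filter_upwards with s
      refine ⟨h.1, h.2.1, fun i hi => ?_⟩
      rw [Function.update_of_ne (by omega)]; exact h.2.2 i hi
  have hU3 : ∀ x t v, U x t v → ∀ᶠ y in nhds x, U y t v := by
    intro x t v h
    have hball : Metric.ball x₀ δ ∈ nhds x := Metric.isOpen_ball.mem_nhds h.1
    filter_upwards [hball] with y hy
    exact ⟨hy, h.2.1, h.2.2⟩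
  have hUseg : ∀ k : ℕ, ∀ x t v, U x t v → ∀ j s, k < j →
      s ∈ Set.uIcc (v j) (v₀ j) → U x t (Function.update v j s) := by
    intro k x t v h j s _ hs
    refine ⟨h.1, h.2.1, fun i hi => ?_⟩
    rcases eq_or_ne i j with rfl | hij
    · rw [Function.update_self]
      exact lt_of_le_of_lt (S7.dist_le_of_mem_uIcc hs) (h.2.2 i hi)
    · rw [Function.update_of_ne hij]; exact h.2.2 i hi
  -- the descending chain of vanishing partials of R on U
  set P : ℕ → Prop := fun k => ∀ x t v, U x t v → ∀ j, k < j → pdv j R x t v = 0 with hPdef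
  have hPM : P M := fun x t v _ j hj => S7.pdv_high hRM hj x t v
  have hstep : ∀ k : ℕ, 5 ≤ k → k + 1 ≤ M → P (k + 1) → P k := by
    intro k hk5 hkM hPk1
    have hnew : ∀ x t v, U x t v → pdv (k + 1) R x t v = 0 := by
      intro x t v hq
      set R' : ℝ → ℝ → (ℕ → ℝ) → ℝ :=
        fun x t v => R x t (fun j => if j ≤ k + 1 then v j else v₀ j) with hR'def
      have hEq : ∀ x t v, U x t v → R x t v = R' x t v :=
        S7.freeze_eq hRM (k + 1) (hUseg (k + 1)) hPk1
      have hR'c : IsCyl (k + 1) R' := S7.isCyl_freeze hRM (by omega) v₀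
      have hkey := S7.key_lhs hS hRM hR'c hU2 hU3 hEq (by omega) hq
      have hrhs := S7.key_rhs hS (show 0 < k + 1 by omega) x t v
      have hMTpdv : pdv (n + (k + 1)) (totalDt R S) x t v
          = pdv (n + (k + 1))
              (fun x t v => (S x t v) ^ ((5 : ℝ) / 2) * (totalDx^[5] S) x t v) x t v :=
        S7.pdv_congr_fun hMT _ x t v
      rw [hkey, hrhs] at hMTpdv
      rw [S7.pdv_high (S7.isCyl_iter hS 5) (show n + 5 < n + (k + 1) by omega) x t v,
        mul_zero] at hMTpdv
      exact (mul_eq_zero.mp hMTpdv).resolve_right (hUne x t v hq)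
    intro x t v hq j hj
    rcases Nat.eq_or_lt_of_le (Nat.succ_le_of_lt hj) with hj1 | hj1
    · rw [← hj1]; exact hnew x t v hq
    · exact hPk1 x t v hq j hj1
  have hdesc : ∀ d : ℕ, d ≤ M - 5 → P (M - d) := by
    intro d
    induction d with
    | zero => intro _; simpa using hPM
    | succ d ih =>
        intro hd
        have h1 : P (M - d) := ih (by omega)
        have h2 := hstep (M - (d + 1)) (by omega) (by omega)
        rw [show M - (d + 1) + 1 = M - d from by omega] at h2
        exact h2 h1
  have hP5 : P 5 := by
    have := hdesc (M - 5) (le_refl _)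
    rwa [show M - (M - 5) = 5 from by omega] at this
  -- the order-5 freeze of R
  set R' : ℝ → ℝ → (ℕ → ℝ) → ℝ :=
    fun x t v => R x t (fun j => if j ≤ 5 then v j else v₀ j) with hR'def
  have hEq : ∀ x t v, U x t v → R x t v = R' x t v :=
    S7.freeze_eq hRM 5 (hUseg 5) hP5
  have hR'c : IsCyl 5 R' := S7.isCyl_freeze hRM (by omega) v₀
  have hrel : ∀ x t v, U x t v → pdv 5 R x t v = (S x t v) ^ ((5 : ℝ) / 2) := by
    intro x t v hq
    have hkey := S7.key_lhs hS hRM hR'c hU2 hU3 hEq (by omega) hq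
    have hrhs := S7.key_rhs hS (show 0 < 5 by omega) x t v
    have hMTpdv : pdv (n + 5) (totalDt R S) x t v
        = pdv (n + 5)
            (fun x t v => (S x t v) ^ ((5 : ℝ) / 2) * (totalDx^[5] S) x t v) x t v :=
      S7.pdv_congr_fun hMT _ x t v
    rw [hkey, hrhs, S7.pdv_top_iter hS 5 x t v] at hMTpdv
    exact mul_right_cancel₀ (hUne x t v hq) hMTpdv
  -- endgame: differentiate the relation in v_n
  have hq₀U : U x₀ t₀ v₀ := by
    refine ⟨by simpa using hδ, by simpa using hδ, fun i _ => by simpa using hδ⟩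
  have hconst : ∀ᶠ s in nhds (v₀ n),
      S x₀ t₀ (Function.update v₀ n s) ^ ((5 : ℝ) / 2) = pdv 5 R' x₀ t₀ v₀ := by
    have hmem : Metric.ball (v₀ n) δ ∈ nhds (v₀ n) := Metric.ball_mem_nhds _ hδ
    filter_upwards [hmem] with s hs
    have hqs : U x₀ t₀ (Function.update v₀ n s) := by
      refine ⟨by simpa using hδ, by simpa using hδ, fun i hi => ?_⟩
      rcases eq_or_ne i n with rfl | hin
      · rwa [Function.update_self]
      · rw [Function.update_of_ne hin]; simpa using hδ
    rw [← hrel _ _ _ hqs, S7.pdv_congrU hU2 hEq hqs 5]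
    exact S7.pdv_update_high hR'c (show 5 < n by omega) (show 5 ≠ n by omega) x₀ t₀ v₀ s
  have hd0 : deriv (fun s => S x₀ t₀ (Function.update v₀ n s) ^ ((5 : ℝ) / 2)) (v₀ n) = 0 := by
    have := Filter.EventuallyEq.deriv_eq (f := fun _ => pdv 5 R' x₀ t₀ v₀) hconst
    rw [this, deriv_const]
  have hdS : HasDerivAt (fun s => S x₀ t₀ (Function.update v₀ n s))
      (pdv n S x₀ t₀ v₀) (v₀ n) :=
    (S7.diff_line hS x₀ t₀ v₀ n (v₀ n)).hasDerivAt
  have hpow := hdS.rpow_const (p := (5 : ℝ) / 2) (Or.inr (by norm_num))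
  rw [Function.update_eq_self] at hpow
  have hderiv := hpow.deriv
  rw [hd0] at hderiv
  have h2 : (0:ℝ) < S x₀ t₀ v₀ ^ ((5 : ℝ) / 2 - 1) :=
    Real.rpow_pos_of_pos (hSpos _ _ _) _
  exact (mul_ne_zero (mul_ne_zero hq₀ (by norm_num)) h2.ne') hderiv.symm
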